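/- The union operation on closed types of the same shape is well-defined and is a least upper bound with respect to subtyping: for closed types A₁, A₂ of the same shape, A₁ ≤ A₁ ∪ A₂, A₂ ≤ A₁ ∪ A₂, and whenever A₁ ≤ B and A₂ ≤ B then A₁ ∪ A₂ ≤ B. Dually, intersection is a greatest lower bound. -/

import Mathlib

/-- Operations are pairs (instance, operation symbol). -/
abbrev Operation := ℕ × ℕ
/-- A dirt is a finite set of operations. -/
abbrev Dirt := Finset Operation
/-- A region is a finite set of instances. -/
abbrev Region := Finset ℕ

/-- Closed core Eff types: ground types, function types `A → (B ! Δ)`,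
effect types `E^R` and handler types `(A ! Δ₁) ⇒ (B ! Δ₂)`. -/
inductive Ty : Type where
  | bool : Ty
  | nat : Ty
  | unit : Ty
  | empty : Ty
  | fn : Ty → Ty → Dirt → Ty
  | eff : ℕ → Region → Ty
  | hand : Ty → Dirt → Ty → Dirt → Ty
  deriving DecidableEq

/-- Dirty types `A ! Δ`. -/
abbrev DirtyTy := Ty × Dirt

/-- Structural subtyping on core Eff types. -/
inductive SubTy : Ty → Ty → Prop where
  | bool : SubTy .bool .bool
  | nat : SubTy .nat .nat
  | unit : SubTy .unit .unit
  | empty : SubTy .empty .empty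
  | fn {A A' B B' : Ty} {Δ Δ' : Dirt} :
      SubTy A' A → SubTy B B' → Δ ⊆ Δ' → SubTy (.fn A B Δ) (.fn A' B' Δ')
  | eff {E : ℕ} {R R' : Region} : R ⊆ R' → SubTy (.eff E R) (.eff E R')
  | hand {A A' B B' : Ty} {Δ₁ Δ₁' Δ₂ Δ₂' : Dirt} :
      SubTy A' A → Δ₁' ⊆ Δ₁ → SubTy B B' → Δ₂ ⊆ Δ₂' →
      SubTy (.hand A Δ₁ B Δ₂) (.hand A' Δ₁' B' Δ₂')

/-- Subtyping of dirty types: `A ! Δ ≤ A' ! Δ'` iff `A ≤ A'` and `Δ ⊆ Δ'`. -/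
def SubD (C C' : DirtyTy) : Prop := SubTy C.1 C'.1 ∧ C.2 ⊆ C'.2

/-- Two types have the same shape iff they differ only in regions and dirts. -/
def SameShape : Ty → Ty → Prop
  | .bool, .bool => True
  | .nat, .nat => True
  | .unit, .unit => True
  | .empty, .empty => True
  | .fn A B _, .fn A' B' _ => SameShape A A' ∧ SameShape B B'
  | .eff E _, .eff E' _ => E = E'
  | .hand A _ B _, .hand A' _ B' _ => SameShape A A' ∧ SameShape B B'
  | _, _ => False

mutual
/-- Union of two closed types of the same shape (junk on mismatched shapes). -/
def tyUnion : Ty → Ty → Ty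
  | .fn A B Δ, .fn A' B' Δ' => .fn (tyInter A A') (tyUnion B B') (Δ ∪ Δ')
  | .eff E R, .eff _ R' => .eff E (R ∪ R')
  | .hand A Δ₁ B Δ₂, .hand A' Δ₁' B' Δ₂' =>
      .hand (tyInter A A') (Δ₁ ∩ Δ₁') (tyUnion B B') (Δ₂ ∪ Δ₂')
  | A, _ => A
/-- Intersection of two closed types of the same shape (junk on mismatched shapes). -/
def tyInter : Ty → Ty → Ty
  | .fn A B Δ, .fn A' B' Δ' => .fn (tyUnion A A') (tyInter B B') (Δ ∩ Δ')
  | .eff E R, .eff _ R' => .eff E (R ∩ R')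
  | .hand A Δ₁ B Δ₂, .hand A' Δ₁' B' Δ₂' =>
      .hand (tyUnion A A') (Δ₁ ∪ Δ₁') (tyInter B B') (Δ₂ ∩ Δ₂')
  | A, _ => A
end

def IsSubTyLUB (A₁ A₂ C : Ty) : Prop :=
  SubTy A₁ C ∧ SubTy A₂ C ∧ ∀ B, SubTy A₁ B → SubTy A₂ B → SubTy C B

def IsSubTyGLB (A₁ A₂ C : Ty) : Prop :=
  SubTy C A₁ ∧ SubTy C A₂ ∧ ∀ B, SubTy B A₁ → SubTy B A₂ → SubTy B C

theorem IsSubTyLUB.of_refl {A : Ty} (h : SubTy A A) : IsSubTyLUB A A A :=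
  ⟨h, h, fun _ h₁ _ => h₁⟩

theorem IsSubTyGLB.of_refl {A : Ty} (h : SubTy A A) : IsSubTyGLB A A A :=
  ⟨h, h, fun _ h₁ _ => h₁⟩

theorem IsSubTyLUB.eff (E : ℕ) (R R' : Region) :
    IsSubTyLUB (.eff E R) (.eff E R') (.eff E (R ∪ R')) := by
  refine ⟨.eff Finset.subset_union_left, .eff Finset.subset_union_right, ?_⟩
  intro B h₁ h₂
  cases h₁ with | eff h₁ =>
  cases h₂ with | eff h₂ =>
  exact .eff (Finset.union_subset h₁ h₂)

theorem IsSubTyGLB.eff (E : ℕ) (R R' : Region) :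
    IsSubTyGLB (.eff E R) (.eff E R') (.eff E (R ∩ R')) := by
  refine ⟨.eff Finset.inter_subset_left, .eff Finset.inter_subset_right, ?_⟩
  intro B h₁ h₂
  cases h₁ with | eff h₁ =>
  cases h₂ with | eff h₂ =>
  exact .eff (Finset.subset_inter h₁ h₂)

section Arrows

variable {A A' X B B' Y : Ty}

theorem IsSubTyLUB.fn (hA : IsSubTyGLB A A' X) (hB : IsSubTyLUB B B' Y) (Δ Δ' : Dirt) :
    IsSubTyLUB (.fn A B Δ) (.fn A' B' Δ') (.fn X Y (Δ ∪ Δ')) := by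
  refine ⟨.fn hA.1 hB.1 Finset.subset_union_left,
    .fn hA.2.1 hB.2.1 Finset.subset_union_right, ?_⟩
  intro C h₁ h₂
  cases h₁ with | fn hA₁ hB₁ hΔ₁ =>
  cases h₂ with | fn hA₂ hB₂ hΔ₂ =>
  exact .fn (hA.2.2 _ hA₁ hA₂) (hB.2.2 _ hB₁ hB₂) (Finset.union_subset hΔ₁ hΔ₂)

theorem IsSubTyGLB.fn (hA : IsSubTyLUB A A' X) (hB : IsSubTyGLB B B' Y) (Δ Δ' : Dirt) :
    IsSubTyGLB (.fn A B Δ) (.fn A' B' Δ') (.fn X Y (Δ ∩ Δ')) := by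
  refine ⟨.fn hA.1 hB.1 Finset.inter_subset_left,
    .fn hA.2.1 hB.2.1 Finset.inter_subset_right, ?_⟩
  intro C h₁ h₂
  cases h₁ with | fn hA₁ hB₁ hΔ₁ =>
  cases h₂ with | fn hA₂ hB₂ hΔ₂ =>
  exact .fn (hA.2.2 _ hA₁ hA₂) (hB.2.2 _ hB₁ hB₂) (Finset.subset_inter hΔ₁ hΔ₂)

theorem IsSubTyLUB.hand (hA : IsSubTyGLB A A' X) (hB : IsSubTyLUB B B' Y)
    (Δ₁ Δ₁' Δ₂ Δ₂' : Dirt) :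
    IsSubTyLUB (.hand A Δ₁ B Δ₂) (.hand A' Δ₁' B' Δ₂')
      (.hand X (Δ₁ ∩ Δ₁') Y (Δ₂ ∪ Δ₂')) := by
  refine ⟨.hand hA.1 Finset.inter_subset_left hB.1 Finset.subset_union_left,
    .hand hA.2.1 Finset.inter_subset_right hB.2.1 Finset.subset_union_right, ?_⟩
  intro C h₁ h₂
  cases h₁ with | hand hA₁ hΔ₁ hB₁ hΔ₁' =>
  cases h₂ with | hand hA₂ hΔ₂ hB₂ hΔ₂' =>
  exact .hand (hA.2.2 _ hA₁ hA₂) (Finset.subset_inter hΔ₁ hΔ₂) (hB.2.2 _ hB₁ hB₂)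
    (Finset.union_subset hΔ₁' hΔ₂')

theorem IsSubTyGLB.hand (hA : IsSubTyLUB A A' X) (hB : IsSubTyGLB B B' Y)
    (Δ₁ Δ₁' Δ₂ Δ₂' : Dirt) :
    IsSubTyGLB (.hand A Δ₁ B Δ₂) (.hand A' Δ₁' B' Δ₂')
      (.hand X (Δ₁ ∪ Δ₁') Y (Δ₂ ∩ Δ₂')) := by
  refine ⟨.hand hA.1 Finset.subset_union_left hB.1 Finset.inter_subset_left,
    .hand hA.2.1 Finset.subset_union_right hB.2.1 Finset.inter_subset_right, ?_⟩
  intro C h₁ h₂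
  cases h₁ with | hand hA₁ hΔ₁ hB₁ hΔ₁' =>
  cases h₂ with | hand hA₂ hΔ₂ hB₂ hΔ₂' =>
  exact .hand (hA.2.2 _ hA₁ hA₂) (Finset.union_subset hΔ₁ hΔ₂) (hB.2.2 _ hB₁ hB₂)
    (Finset.subset_inter hΔ₁' hΔ₂')

end Arrows

/-- Union and intersection are proved together, since contravariance of argument types swaps
them. -/
theorem isSubTyLUB_tyUnion_and_isSubTyGLB_tyInter {A₁ A₂ : Ty} (h : SameShape A₁ A₂) :
    IsSubTyLUB A₁ A₂ (tyUnion A₁ A₂) ∧ IsSubTyGLB A₁ A₂ (tyInter A₁ A₂) := by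
  induction A₁ generalizing A₂ <;> cases A₂ <;> simp only [SameShape] at h
  case bool.bool => exact ⟨.of_refl .bool, .of_refl .bool⟩
  case nat.nat => exact ⟨.of_refl .nat, .of_refl .nat⟩
  case unit.unit => exact ⟨.of_refl .unit, .of_refl .unit⟩
  case empty.empty => exact ⟨.of_refl .empty, .of_refl .empty⟩
  case eff.eff E R _ R' =>
    subst h
    exact ⟨.eff E R R', .eff E R R'⟩
  case fn.fn A B Δ ihA ihB A' B' Δ' =>
    have ⟨hAU, hAI⟩ := ihA h.1
    have ⟨hBU, hBI⟩ := ihB h.2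
    exact ⟨.fn hAI hBU Δ Δ', .fn hAU hBI Δ Δ'⟩
  case hand.hand A Δ₁ B Δ₂ ihA ihB A' Δ₁' B' Δ₂' =>
    have ⟨hAU, hAI⟩ := ihA h.1
    have ⟨hBU, hBI⟩ := ihB h.2
    exact ⟨.hand hAI hBU Δ₁ Δ₁' Δ₂ Δ₂', .hand hAU hBI Δ₁ Δ₁' Δ₂ Δ₂'⟩

/-- For closed types of the same shape, the union is a least upper bound and the
intersection is a greatest lower bound with respect to structural subtyping. -/
theorem tyUnion_lub_tyInter_glb (A₁ A₂ : Ty) (h : SameShape A₁ A₂) :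
    SubTy A₁ (tyUnion A₁ A₂) ∧ SubTy A₂ (tyUnion A₁ A₂) ∧
    (∀ B : Ty, SubTy A₁ B → SubTy A₂ B → SubTy (tyUnion A₁ A₂) B) ∧
    SubTy (tyInter A₁ A₂) A₁ ∧ SubTy (tyInter A₁ A₂) A₂ ∧
    (∀ B : Ty, SubTy B A₁ → SubTy B A₂ → SubTy B (tyInter A₁ A₂)) := by
  obtain ⟨⟨hU₁, hU₂, hU⟩, ⟨hI₁, hI₂, hI⟩⟩ := isSubTyLUB_tyUnion_and_isSubTyGLB_tyInter h
  exact ⟨hU₁, hU₂, hU, hI₁, hI₂, hI⟩
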